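/- Fix $t > 0$. The transformation $\mathcal{T}(\phi)(s) = \phi_s - \log\{1 + \frac{A_s(\phi)}{A_t(\phi)}(e^{2\phi_t} - 1)\}$, with $A_s(\phi) = \int_0^s e^{2\phi_u}du$, is an involution on $C([0,t];\mathbb{R})$: $\mathcal{T}(\mathcal{T}(\phi)) = \phi$ for all continuous $\phi$. -/

import Mathlib

/-- The exponential additive functional. -/
noncomputable def A (φ : ℝ → ℝ) (s : ℝ) : ℝ := ∫ u in (0:ℝ)..s, Real.exp (2 * φ u)

/-- The transformation `𝒯` on paths over `[0,t]`. -/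
noncomputable def T (t : ℝ) (φ : ℝ → ℝ) (s : ℝ) : ℝ :=
  φ s - Real.log (1 + A φ s / A φ t * (Real.exp (2 * φ t) - 1))

lemma key (t : ℝ) (ht : 0 < t) (ψ : ℝ → ℝ) (hψ : Continuous ψ) :
    ∀ s ∈ Set.Icc (0:ℝ) t, T t (T t ψ) s = ψ s := by
  have hexp : Continuous fun u => Real.exp (2 * ψ u) := by continuity
  have hA : ∀ u : ℝ, HasDerivAt (A ψ) (Real.exp (2 * ψ u)) u := fun u =>
    intervalIntegral.integral_hasDerivAt_right (hexp.intervalIntegrable _ _)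
      hexp.stronglyMeasurable.stronglyMeasurableAtFilter hexp.continuousAt
  have hAcont : Continuous (A ψ) :=
    continuous_iff_continuousAt.2 fun u => (hA u).continuousAt
  have hAmono : StrictMono (A ψ) :=
    strictMono_of_hasDerivAt_pos hA fun u => Real.exp_pos _
  have hA0 : A ψ 0 = 0 := intervalIntegral.integral_same
  have hAtpos : 0 < A ψ t := by
    have := hAmono ht; rwa [hA0] at this
  have hAtne : A ψ t ≠ 0 := ne_of_gt hAtpos
  set E : ℝ := Real.exp (2 * ψ t) with hE
  have hEpos : 0 < E := Real.exp_pos _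
  set D : ℝ → ℝ := fun s => 1 + A ψ s / A ψ t * (E - 1) with hDdef
  have hDpos : ∀ s ∈ Set.Icc (0:ℝ) t, 0 < D s := by
    intro s hs
    have h0 : 0 ≤ A ψ s := by
      have := hAmono.monotone hs.1; rwa [hA0] at this
    have h1 : A ψ s / A ψ t ≤ 1 := by
      rw [div_le_one hAtpos]; exact hAmono.monotone hs.2
    have h0' : 0 ≤ A ψ s / A ψ t := div_nonneg h0 hAtpos.le
    show 0 < 1 + A ψ s / A ψ t * (E - 1)
    rcases lt_or_ge (A ψ s / A ψ t) 1 with h | h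
    · nlinarith [mul_nonneg h0' hEpos.le]
    · have hr : A ψ s / A ψ t = 1 := le_antisymm h1 h
      rw [hr]; linarith
  have hDcont : Continuous D :=
    continuous_const.add ((hAcont.div_const _).mul continuous_const)
  have hTψ : ∀ u, T t ψ u = ψ u - Real.log (D u) := fun u => rfl
  have hexpT : ∀ u ∈ Set.Icc (0:ℝ) t,
      Real.exp (2 * T t ψ u) = Real.exp (2 * ψ u) / (D u) ^ 2 := by
    intro u hu
    have hd := hDpos u hu
    rw [hTψ, mul_sub, show (2:ℝ) * Real.log (D u) = Real.log ((D u) ^ 2) by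
      rw [Real.log_pow]; push_cast; ring,
      Real.exp_sub, Real.exp_log (by positivity)]
  have hDt : D t = E := by
    simp only [hDdef, div_self hAtne]; ring
  have hD' : ∀ u : ℝ, HasDerivAt D (Real.exp (2 * ψ u) / A ψ t * (E - 1)) u := by
    intro u
    exact (((hA u).div_const (A ψ t)).mul_const (E - 1)).const_add 1
  set g : ℝ → ℝ := fun u => A ψ u / D u with hgdef
  have hg : ∀ u ∈ Set.Icc (0:ℝ) t, HasDerivAt g (Real.exp (2 * T t ψ u)) u := by
    intro u hu
    have hd := hDpos u hu
    have hder := (hA u).div (hD' u) (ne_of_gt hd)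
    have hnum : Real.exp (2 * ψ u) * D u - A ψ u * (Real.exp (2 * ψ u) / A ψ t * (E - 1))
        = Real.exp (2 * ψ u) := by
      simp only [hDdef]; field_simp; ring
    rw [hnum, ← hexpT u hu] at hder
    exact hder
  have hAT : ∀ s ∈ Set.Icc (0:ℝ) t, A (T t ψ) s = A ψ s / D s := by
    intro s hs
    have hsub : Set.uIcc (0:ℝ) s ⊆ Set.Icc 0 t := by
      rw [Set.uIcc_of_le hs.1]
      exact Set.Icc_subset_Icc le_rfl hs.2
    have hcont : ContinuousOn (fun u => Real.exp (2 * T t ψ u)) (Set.uIcc 0 s) := by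
      apply ContinuousOn.mono _ hsub
      have : ContinuousOn (fun u => Real.exp (2 * ψ u) / (D u) ^ 2) (Set.Icc 0 t) := by
        apply ContinuousOn.div hexp.continuousOn (hDcont.pow 2).continuousOn
        intro x hx; exact pow_ne_zero _ (ne_of_gt (hDpos x hx))
      exact this.congr fun x hx => hexpT x hx
    have h2 := intervalIntegral.integral_eq_sub_of_hasDerivAt
      (fun u hu => hg u (hsub hu)) hcont.intervalIntegrable
    calc A (T t ψ) s = g s - g 0 := h2
    _ = A ψ s / D s := by rw [hgdef]; simp [hA0]
  intro s hs
  have hst : t ∈ Set.Icc (0:ℝ) t := ⟨ht.le, le_rfl⟩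
  have hds := hDpos s hs
  have hdt := hDpos t hst
  have h1 : D s * A ψ t = A ψ t + A ψ s * (E - 1) := by
    simp only [hDdef]; field_simp
  have hinner : 1 + A (T t ψ) s / A (T t ψ) t * (Real.exp (2 * T t ψ t) - 1)
      = (D s)⁻¹ := by
    rw [hAT s hs, hAT t hst, hexpT t hst, hDt, ← hE]
    field_simp
    linear_combination h1
  rw [show T t (T t ψ) s
      = T t ψ s - Real.log (1 + A (T t ψ) s / A (T t ψ) t * (Real.exp (2 * T t ψ t) - 1))
      from rfl, hinner, Real.log_inv, hTψ]
  ring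

theorem stmt13 (t : ℝ) (ht : 0 < t) (φ : ℝ → ℝ)
    (hφ : ContinuousOn φ (Set.Icc 0 t)) :
    ∀ s ∈ Set.Icc (0:ℝ) t, T t (T t φ) s = φ s := by
  set ψ : ℝ → ℝ := fun u => φ (max 0 (min u t)) with hψdef
  have hclamp : Continuous fun u : ℝ => max 0 (min u t) :=
    continuous_const.max (continuous_id.min continuous_const)
  have hrange : ∀ u : ℝ, max 0 (min u t) ∈ Set.Icc (0:ℝ) t := by
    intro u
    exact ⟨le_max_left _ _, max_le ht.le (min_le_right _ _)⟩
  have hψcont : Continuous ψ := hφ.comp_continuous hclamp hrange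
  have heq : ∀ u ∈ Set.Icc (0:ℝ) t, ψ u = φ u := by
    intro u hu
    simp [hψdef, min_eq_left hu.2, max_eq_right hu.1]
  have hAeq : ∀ s ∈ Set.Icc (0:ℝ) t, A φ s = A ψ s := by
    intro s hs
    apply intervalIntegral.integral_congr
    intro u hu
    rw [Set.uIcc_of_le hs.1] at hu
    show Real.exp (2 * φ u) = Real.exp (2 * ψ u)
    rw [heq u ⟨hu.1, hu.2.trans hs.2⟩]
  have hst : t ∈ Set.Icc (0:ℝ) t := ⟨ht.le, le_rfl⟩
  have hTeq : ∀ s ∈ Set.Icc (0:ℝ) t, T t φ s = T t ψ s := by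
    intro s hs
    rw [T, T, hAeq s hs, hAeq t hst, heq s hs, heq t hst]
  have hATeq : ∀ s ∈ Set.Icc (0:ℝ) t, A (T t φ) s = A (T t ψ) s := by
    intro s hs
    apply intervalIntegral.integral_congr
    intro u hu
    rw [Set.uIcc_of_le hs.1] at hu
    show Real.exp (2 * T t φ u) = Real.exp (2 * T t ψ u)
    rw [hTeq u ⟨hu.1, hu.2.trans hs.2⟩]
  intro s hs
  rw [T, hATeq s hs, hATeq t hst, hTeq s hs, hTeq t hst, ← T]
  rw [key t ht ψ hψcont s hs, ← heq s hs]
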